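/- arXiv:2304.07818 — 2 statements merged into one kernel-verified Lean document; each statement's English description precedes it below -/
import Mathlib

section
/- Under the stated hypotheses, for every natural number j one has D_{(β+j)τ} = M_D(0, β+j)^{-1} · M_D(0, j+1) · M_C((j+1)τ, α). -/
/-- The ordered product `D_j · D_{j+τ} ⋯ D_{j+(k-1)τ}`. -/
def chainProd {G : Type*} [Group G] (D : ℕ → G) (τ j k : ℕ) : G :=
  ((List.range k).map fun i => D (j + i * τ)).prod

lemma chainProd_succ {G : Type*} [Group G] (D : ℕ → G) (τ j k : ℕ) :
    chainProd D τ j (k + 1) = chainProd D τ j k * D (j + k * τ) := by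
  simp [chainProd, List.range_succ]

lemma map_chainProd {G : Type*} [Group G] (φ : G →* G) (D : ℕ → G)
    (hD : ∀ j, φ (D j) = D (j + 1)) (τ j k : ℕ) :
    φ (chainProd D τ j k) = chainProd D τ (j + 1) k := by
  induction k with
  | zero => simp [chainProd]
  | succ k ih =>
      rw [chainProd_succ, map_mul, ih, hD, chainProd_succ]
      ring_nf

lemma chainProd_add {G : Type*} [Group G] (D : ℕ → G) (τ j a b : ℕ) :
    chainProd D τ j (a + b) = chainProd D τ j a * chainProd D τ (j + a * τ) b := by
  induction b with
  | zero => simp [chainProd]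
  | succ b ih =>
      rw [← Nat.add_assoc, chainProd_succ, ih, chainProd_succ, mul_assoc]
      congr 2
      ring

theorem stmt_4 {G : Type*} [Group G] (φ : G →* G) (D C : ℕ → G)
    (hD : ∀ j, φ (D j) = D (j + 1)) (hC : ∀ j, φ (C j) = C (j + 1))
    (β τ τc α : ℕ) (hβ : 2 ≤ β) (hτ : 0 < τ) (hτc : 0 < τc) (hα : 0 < α)
    (hcomp : α * τc = β * τ)
    (hbase : D ((β - 1) * τ) = (chainProd D τ 0 (β - 1))⁻¹ * chainProd C τc 0 α) :
    ∀ j : ℕ, D ((β + j) * τ) =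
      (chainProd D τ 0 (β + j))⁻¹ * chainProd D τ 0 (j + 1) *
        chainProd C τc ((j + 1) * τ) α := by
  -- shifted version of the base relation
  have key : ∀ m : ℕ, D ((β - 1) * τ + m) =
      (chainProd D τ m (β - 1))⁻¹ * chainProd C τc m α := by
    intro m
    induction m with
    | zero => simpa using hbase
    | succ m ih =>
        have := congrArg φ ih
        rw [map_mul, map_inv, map_chainProd φ D hD, map_chainProd φ C hC, hD] at this
        simpa [Nat.add_assoc] using this
  intro j
  have hsplit : chainProd D τ 0 (β + j) =
      chainProd D τ 0 (j + 1) * chainProd D τ ((j + 1) * τ) (β - 1) := by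
    have hβj : β + j = (j + 1) + (β - 1) := by omega
    rw [hβj, chainProd_add]
    simp
  have hidx : (β - 1) * τ + (j + 1) * τ = (β + j) * τ := by
    have : β - 1 + (j + 1) = β + j := by omega
    rw [← Nat.add_mul, this]
  have h := key ((j + 1) * τ)
  rw [hidx] at h
  rw [h]
  have : (chainProd D τ ((j + 1) * τ) (β - 1))⁻¹ =
      (chainProd D τ 0 (β + j))⁻¹ * chainProd D τ 0 (j + 1) := by
    rw [hsplit]
    group
  rw [this]
end

section
/- If positive integers satisfy γ_c·β = α·γ_d, and u, λ_c are positive integers such that u·α = lcm(λ_c, α) with λ_c ∣ γ_c and α ∣ γ_c, then u·β divides γ_d. -/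
theorem stmt_10 (γc γd α β lamc u : ℕ)
    (hγc : 0 < γc) (hγd : 0 < γd) (hα : 0 < α) (hβ : 0 < β)
    (hlamc : 0 < lamc) (hu : 0 < u)
    (h1 : γc * β = α * γd) (h2 : u * α = Nat.lcm lamc α)
    (h3 : lamc ∣ γc) (h4 : α ∣ γc) :
    u * β ∣ γd := by
  have hdvd : u * α ∣ γc := h2 ▸ Nat.lcm_dvd h3 h4
  obtain ⟨k, hk⟩ := hdvd
  refine ⟨k, Nat.eq_of_mul_eq_mul_left hα ?_⟩
  rw [← h1, hk]; ring
end
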